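/- arXiv:1710.05777 — 4 statements merged into one kernel-verified Lean document; each statement's English description precedes it below -/
import Mathlib

section
/- Let (S_n)_{n∈ℤ} be a real-valued stochastic process with S_0 = 0, stationary increments (i.e., for every n_0 ∈ ℤ, the process (S_{n_0+n} − S_{n_0})_{n∈ℤ} has the same law as (S_n)_{n∈ℤ}), and such that P(S_j = S_k) = 0 for all j ≠ k. Then for every N ≥ 1, P(S_n ≤ 0 for all n with |n| ≤ N) ≤ 1/N. -/
/-!
Let `A` be the event that `S_n ≤ 0` for all `|n| ≤ N`. Shifting the time origin to `k ∈ [1, N]`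
and using stationarity of the increments, `P(A)` is at most the probability that `S_j ≤ S_k` for
all `j ∈ [0, N]`, i.e. that `k` is a maximiser of `S` on `[0, N]`. Since ties have probability
zero, these `N` events are almost surely disjoint, so `N · P(A) ≤ 1`.
-/

open MeasureTheory Filter
open scoped ENNReal

section

variable {Ω : Type*} [MeasurableSpace Ω]

lemma card_mul_le_one_of_le_measure {ι : Type*} (μ : Measure Ω) [IsProbabilityMeasure μ]
    {s : Finset ι} {t : ι → Set Ω} {x : ℝ≥0∞} (ht : ∀ i ∈ s, NullMeasurableSet (t i) μ)
    (hdisj : Set.Pairwise s (Function.onFun (AEDisjoint μ) t)) (hx : ∀ i ∈ s, x ≤ μ (t i)) :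
    (s.card : ℝ≥0∞) * x ≤ 1 :=
  calc (s.card : ℝ≥0∞) * x = ∑ _i ∈ s, x := by rw [Finset.sum_const, nsmul_eq_mul]
    _ ≤ ∑ i ∈ s, μ (t i) := Finset.sum_le_sum hx
    _ ≤ μ Set.univ := sum_measure_le_measure_univ ht hdisj
    _ = 1 := measure_univ

variable {S : ℤ → Ω → ℝ}

lemma measurableSet_isMaxOn (hS : ∀ n, Measurable (S n)) (s : Set ℤ) (k : ℤ) :
    MeasurableSet {ω | IsMaxOn (S · ω) s k} := by
  simp only [isMaxOn_iff, Set.ofPred_forall]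
  exact MeasurableSet.biInter s.to_countable fun j _ => measurableSet_le (hS j) (hS k)

lemma aedisjoint_isMaxOn (μ : Measure Ω) (hNoTies : ∀ j k, j ≠ k → μ {ω | S j ω = S k ω} = 0)
    {s : Set ℤ} {j k : ℤ} (hj : j ∈ s) (hk : k ∈ s) (hjk : j ≠ k) :
    AEDisjoint μ {ω | IsMaxOn (S · ω) s j} {ω | IsMaxOn (S · ω) s k} :=
  measure_mono_null (fun _ hω => le_antisymm (isMaxOn_iff.1 hω.2 j hj) (isMaxOn_iff.1 hω.1 k hk))
    (hNoTies j k hjk)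

lemma measure_preimage_shift_eq (μ : Measure Ω) (hS : ∀ n, Measurable (S n)) {n₀ : ℤ}
    (hStat : Measure.map (fun ω n => S (n₀ + n) ω - S n₀ ω) μ = Measure.map (fun ω n => S n ω) μ)
    {C : Set (ℤ → ℝ)} (hC : MeasurableSet C) :
    μ ((fun ω n => S (n₀ + n) ω - S n₀ ω) ⁻¹' C) = μ ((fun ω n => S n ω) ⁻¹' C) := by
  have hShift : Measurable fun ω n => S (n₀ + n) ω - S n₀ ω :=
    measurable_pi_lambda _ fun n => (hS _).sub (hS n₀)
  have hPath : Measurable fun ω n => S n ω := measurable_pi_lambda _ hS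
  rw [← Measure.map_apply hShift hC, hStat, Measure.map_apply hPath hC]

lemma measure_nonpos_le_measure_isMaxOn (μ : Measure Ω) (hS : ∀ n, Measurable (S n))
    (hStat : ∀ n₀ : ℤ, Measure.map (fun ω n => S (n₀ + n) ω - S n₀ ω) μ
      = Measure.map (fun ω n => S n ω) μ)
    (N : ℕ) {k : ℤ} (hk : k ∈ Set.Icc 0 (N : ℤ)) :
    μ {ω | ∀ n : ℤ, |n| ≤ N → S n ω ≤ 0} ≤ μ {ω | IsMaxOn (S · ω) (Set.Icc 0 N) k} := by
  set C : Set (ℤ → ℝ) := {f | ∀ n : ℤ, |n| ≤ N → f n ≤ 0}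
  have hC : MeasurableSet C := by
    simp only [C, Set.ofPred_forall]
    exact MeasurableSet.iInter fun n => MeasurableSet.iInter fun _ =>
      measurableSet_le (measurable_pi_apply n) measurable_const
  calc μ {ω | ∀ n : ℤ, |n| ≤ N → S n ω ≤ 0} = μ ((fun ω n => S n ω) ⁻¹' C) := rfl
    _ = μ ((fun ω n => S (k + n) ω - S k ω) ⁻¹' C) :=
      (measure_preimage_shift_eq μ hS (hStat k) hC).symm
    _ ≤ μ {ω | IsMaxOn (S · ω) (Set.Icc 0 N) k} := measure_mono fun ω hω => by
      refine isMaxOn_iff.2 fun j hj => ?_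
      obtain ⟨hk0, hkN⟩ := hk
      obtain ⟨hj0, hjN⟩ := hj
      have := hω (j - k) (abs_le.2 ⟨by omega, by omega⟩)
      simp only [add_sub_cancel] at this
      linarith

end

theorem stmt_0_general {Ω : Type*} [MeasurableSpace Ω] (P : Measure Ω) [IsProbabilityMeasure P]
    (S : ℤ → Ω → ℝ) (hMeas : ∀ n, Measurable (S n))
    (hStat : ∀ n₀ : ℤ,
      Measure.map (fun ω => fun n : ℤ => S (n₀ + n) ω - S n₀ ω) P
        = Measure.map (fun ω => fun n : ℤ => S n ω) P)
    (hNoTies : ∀ j k : ℤ, j ≠ k → P {ω | S j ω = S k ω} = 0)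
    (N : ℕ) :
    P {ω | ∀ n : ℤ, |n| ≤ (N : ℤ) → S n ω ≤ 0} ≤ (N : ENNReal)⁻¹ := by
  have hIcc : ∀ k ∈ Finset.Icc (1 : ℤ) N, k ∈ Set.Icc (0 : ℤ) N := fun k hk => by
    obtain ⟨hk1, hkN⟩ := Finset.mem_Icc.1 hk
    exact ⟨by omega, hkN⟩
  have hcard : (Finset.Icc (1 : ℤ) N).card = N := by simp
  have hNA := card_mul_le_one_of_le_measure P
    (t := fun k => {ω | IsMaxOn (S · ω) (Set.Icc 0 N) k})
    (fun k _ => (measurableSet_isMaxOn hMeas _ k).nullMeasurableSet)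
    (fun j hj k hk hjk => aedisjoint_isMaxOn P hNoTies (hIcc j hj) (hIcc k hk) hjk)
    (fun k hk => measure_nonpos_le_measure_isMaxOn P hMeas hStat N (hIcc k hk))
  rw [hcard] at hNA
  rwa [ENNReal.le_inv_iff_mul_le, mul_comm]

/-- If `(S_n)_{n∈ℤ}` is a real-valued process with `S_0 = 0`, stationary
increments, and `P(S_j = S_k) = 0` for `j ≠ k`, then for every `N ≥ 1`,
`P(S_n ≤ 0 for all |n| ≤ N) ≤ 1/N`. -/
theorem stmt_0 {Ω : Type*} [MeasurableSpace Ω] (P : Measure Ω) [IsProbabilityMeasure P]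
    (S : ℤ → Ω → ℝ) (hMeas : ∀ n, Measurable (S n))
    (hS0 : ∀ ω, S 0 ω = 0)
    (hStat : ∀ n₀ : ℤ,
      Measure.map (fun ω => fun n : ℤ => S (n₀ + n) ω - S n₀ ω) P
        = Measure.map (fun ω => fun n : ℤ => S n ω) P)
    (hNoTies : ∀ j k : ℤ, j ≠ k → P {ω | S j ω = S k ω} = 0)
    (N : ℕ) (hN : 1 ≤ N) :
    P {ω | ∀ n : ℤ, |n| ≤ (N : ℤ) → S n ω ≤ 0} ≤ (N : ENNReal)⁻¹ :=
  stmt_0_general P S hMeas hStat hNoTies N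
end

section
/- Let I : {0, 1, …, N} → ℝ be any function with I(0) = 0. For 1 ≤ k ≤ N−1, define γ_k^− = min_{1≤n≤k} (I(k) − I(k−n))/n and γ_k^+ = max_{1≤n≤N−k} (I(k+n) − I(k))/n, and also γ_0^+ = max_{1≤n≤N} I(n)/n and γ_N^− = min_{1≤n≤N} (I(N) − I(N−n))/n. Then Σ_{k=1}^{N−1} max(γ_k^− − γ_k^+, 0) = γ_0^+ − γ_N^−. -/
/-!
Let `m` maximise the chord slope `(I j - I a) / (j - a)` over `a < j ≤ b`, so that `m` is the first
vertex after `a` of the least concave majorant of `I` on `[a, b]`. Since the chord from `i` to `k`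
is a weighted average of the chords `i → j` and `j → k`, comparing chords shows: for `a < k < m`
the defect `γ_k^- - γ_k^+` is nonpositive; at `k = m` it equals `γ_a^+ - γ_m^+`; and for
`m < k ≤ b` the left slope `γ_k^-` computed from `a` equals the one computed from `m`. Induction on
the interval `[m, b]` then makes the sum telescope.
-/

open Finset

noncomputable def chordSlope (I : ℕ → ℝ) (i j : ℕ) : ℝ := (I j - I i) / ((j : ℝ) - i)

/-- `leftSlope I 0 k` and `rightSlope I k N` are the paper's `γ_k^-` and `γ_k^+`; a general left
endpoint `a` gives the same slopes for `I` restricted to `[a, N]`. -/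
noncomputable def leftSlope (I : ℕ → ℝ) (a k : ℕ) : ℝ := sInf ((chordSlope I · k) '' Set.Ico a k)

noncomputable def rightSlope (I : ℕ → ℝ) (k b : ℕ) : ℝ := sSup ((chordSlope I k ·) '' Set.Ioc k b)

section ChordSlope

variable (I : ℕ → ℝ) {i j k : ℕ}

theorem chordSlope_sub_mul_eq (hij : i < j) (hjk : j < k) :
    (chordSlope I i k - chordSlope I i j) * ((j : ℝ) - i)
      = (chordSlope I j k - chordSlope I i k) * ((k : ℝ) - j) := by
  have hij' : (i : ℝ) < j := by exact_mod_cast hij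
  have hjk' : (j : ℝ) < k := by exact_mod_cast hjk
  simp only [chordSlope]
  field_simp [sub_ne_zero.2 hij'.ne', sub_ne_zero.2 hjk'.ne', sub_ne_zero.2 (hij'.trans hjk').ne']
  ring

theorem chordSlope_le_chordSlope_iff_right (hij : i < j) (hjk : j < k) :
    chordSlope I i j ≤ chordSlope I i k ↔ chordSlope I i k ≤ chordSlope I j k := by
  have h := chordSlope_sub_mul_eq I hij hjk
  have hij' : (0 : ℝ) < j - i := sub_pos.2 (by exact_mod_cast hij)
  have hjk' : (0 : ℝ) < k - j := sub_pos.2 (by exact_mod_cast hjk)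
  rw [← sub_nonneg, ← mul_nonneg_iff_of_pos_right hij', h, mul_nonneg_iff_of_pos_right hjk',
    sub_nonneg]

theorem chordSlope_le_chordSlope_iff_left (hij : i < j) (hjk : j < k) :
    chordSlope I i k ≤ chordSlope I i j ↔ chordSlope I j k ≤ chordSlope I i k := by
  have h := chordSlope_sub_mul_eq I hij hjk
  have hij' : (0 : ℝ) < j - i := sub_pos.2 (by exact_mod_cast hij)
  have hjk' : (0 : ℝ) < k - j := sub_pos.2 (by exact_mod_cast hjk)
  rw [← sub_nonneg, ← mul_nonneg_iff_of_pos_right hij',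
    show (chordSlope I i j - chordSlope I i k) * ((j : ℝ) - i)
      = (chordSlope I i k - chordSlope I j k) * ((k : ℝ) - j) by linarith,
    mul_nonneg_iff_of_pos_right hjk', sub_nonneg]

theorem min_chordSlope_le_chordSlope (hij : i < j) (hjk : j < k) :
    min (chordSlope I i j) (chordSlope I j k) ≤ chordSlope I i k := by
  rcases le_total (chordSlope I i j) (chordSlope I i k) with h | h
  · exact min_le_of_left_le h
  · exact min_le_of_right_le ((chordSlope_le_chordSlope_iff_left I hij hjk).1 h)

end ChordSlope

section SlopeBounds

variable (I : ℕ → ℝ) {a b j k : ℕ} {c : ℝ}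

theorem leftSlope_le_chordSlope (hj : j ∈ Set.Ico a k) : leftSlope I a k ≤ chordSlope I j k :=
  csInf_le ((Set.finite_Ico a k).image _).bddBelow (Set.mem_image_of_mem _ hj)

theorem le_leftSlope_iff (hak : a < k) :
    c ≤ leftSlope I a k ↔ ∀ j ∈ Set.Ico a k, c ≤ chordSlope I j k := by
  rw [leftSlope, le_csInf_iff ((Set.finite_Ico a k).image _).bddBelow
    ((Set.nonempty_Ico.2 hak).image _), Set.forall_mem_image]

theorem chordSlope_le_rightSlope (hj : j ∈ Set.Ioc k b) : chordSlope I k j ≤ rightSlope I k b :=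
  le_csSup ((Set.finite_Ioc k b).image _).bddAbove (Set.mem_image_of_mem _ hj)

theorem rightSlope_le_iff (hkb : k < b) :
    rightSlope I k b ≤ c ↔ ∀ j ∈ Set.Ioc k b, chordSlope I k j ≤ c := by
  rw [rightSlope, csSup_le_iff ((Set.finite_Ioc k b).image _).bddAbove
    ((Set.nonempty_Ioc.2 hkb).image _), Set.forall_mem_image]

theorem leftSlope_eq_sInf (a k : ℕ) :
    leftSlope I a k = sInf ((fun n : ℕ => (I k - I (k - n)) / (n : ℝ)) '' Set.Icc 1 (k - a)) := by
  rw [leftSlope]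
  congr 1
  ext x
  simp only [Set.mem_image, Set.mem_Ico, Set.mem_Icc]
  constructor
  · rintro ⟨j, ⟨haj, hjk⟩, rfl⟩
    refine ⟨k - j, ⟨by omega, by omega⟩, ?_⟩
    rw [chordSlope, Nat.sub_sub_self hjk.le, Nat.cast_sub hjk.le]
  · rintro ⟨n, ⟨hn, hnk⟩, rfl⟩
    refine ⟨k - n, ⟨by omega, by omega⟩, ?_⟩
    rw [chordSlope, Nat.cast_sub (by omega : n ≤ k), sub_sub_cancel]

theorem rightSlope_eq_sSup (k b : ℕ) :
    rightSlope I k b = sSup ((fun n : ℕ => (I (k + n) - I k) / (n : ℝ)) '' Set.Icc 1 (b - k)) := by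
  rw [rightSlope]
  congr 1
  ext x
  simp only [Set.mem_image, Set.mem_Ioc, Set.mem_Icc]
  constructor
  · rintro ⟨j, ⟨hkj, hjb⟩, rfl⟩
    refine ⟨j - k, ⟨by omega, by omega⟩, ?_⟩
    rw [chordSlope, Nat.add_sub_cancel' hkj.le, Nat.cast_sub hkj.le]
  · rintro ⟨n, ⟨hn, hnb⟩, rfl⟩
    refine ⟨k + n, ⟨by omega, by omega⟩, ?_⟩
    rw [chordSlope, Nat.cast_add, add_sub_cancel_left]

end SlopeBounds

section FirstVertex

variable {I : ℕ → ℝ} {a b m : ℕ}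

theorem chordSlope_le_chordSlope_of_isMax_of_lt (hm : m ∈ Set.Ioc a b)
    (hmax : IsMaxOn (chordSlope I a) (Set.Ioc a b) m) {j : ℕ} (hj : j ∈ Set.Ico a m) :
    chordSlope I a m ≤ chordSlope I j m := by
  rcases hj.1.eq_or_lt with rfl | haj
  · rfl
  · exact (chordSlope_le_chordSlope_iff_right I haj hj.2).1 (hmax ⟨haj, hj.2.le.trans hm.2⟩)

theorem leftSlope_eq_chordSlope_of_isMax (hm : m ∈ Set.Ioc a b)
    (hmax : IsMaxOn (chordSlope I a) (Set.Ioc a b) m) : leftSlope I a m = chordSlope I a m :=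
  le_antisymm (leftSlope_le_chordSlope I ⟨le_rfl, hm.1⟩)
    ((le_leftSlope_iff I hm.1).2 fun _ hj => chordSlope_le_chordSlope_of_isMax_of_lt hm hmax hj)

theorem rightSlope_eq_chordSlope_of_isMax (hm : m ∈ Set.Ioc a b)
    (hmax : IsMaxOn (chordSlope I a) (Set.Ioc a b) m) : rightSlope I a b = chordSlope I a m :=
  le_antisymm ((rightSlope_le_iff I (hm.1.trans_le hm.2)).2 fun _ hj => hmax hj)
    (chordSlope_le_rightSlope I hm)

theorem chordSlope_le_chordSlope_of_isMax_of_gt (hm : m ∈ Set.Ioc a b)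
    (hmax : IsMaxOn (chordSlope I a) (Set.Ioc a b) m) {j : ℕ} (hj : j ∈ Set.Ioc m b) :
    chordSlope I m j ≤ chordSlope I a m :=
  ((chordSlope_le_chordSlope_iff_left I hm.1 hj.1).1 (hmax ⟨hm.1.trans hj.1, hj.2⟩)).trans
    (hmax ⟨hm.1.trans hj.1, hj.2⟩)

theorem leftSlope_le_rightSlope_of_lt_isMax (hm : m ∈ Set.Ioc a b)
    (hmax : IsMaxOn (chordSlope I a) (Set.Ioc a b) m) {k : ℕ} (hk : k ∈ Set.Ioo a m) :
    leftSlope I a k ≤ rightSlope I k b :=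
  calc leftSlope I a k ≤ chordSlope I a k := leftSlope_le_chordSlope I ⟨le_rfl, hk.1⟩
    _ ≤ chordSlope I a m := hmax ⟨hk.1, hk.2.le.trans hm.2⟩
    _ ≤ chordSlope I k m :=
      (chordSlope_le_chordSlope_iff_right I hk.1 hk.2).1 (hmax ⟨hk.1, hk.2.le.trans hm.2⟩)
    _ ≤ rightSlope I k b := chordSlope_le_rightSlope I ⟨hk.2, hm.2⟩

theorem leftSlope_eq_of_isMax (hm : m ∈ Set.Ioc a b)
    (hmax : IsMaxOn (chordSlope I a) (Set.Ioc a b) m) {k : ℕ} (hk : k ∈ Set.Ioc m b) :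
    leftSlope I a k = leftSlope I m k := by
  refine le_antisymm ((le_leftSlope_iff I hk.1).2 fun j hj =>
    leftSlope_le_chordSlope I ⟨hm.1.le.trans hj.1, hj.2⟩) ?_
  refine (le_leftSlope_iff I (hm.1.trans hk.1)).2 fun j hj => ?_
  rcases lt_or_ge j m with hjm | hmj
  · have hmk : leftSlope I m k ≤ chordSlope I m k := leftSlope_le_chordSlope I ⟨le_rfl, hk.1⟩
    calc leftSlope I m k
        ≤ min (chordSlope I j m) (chordSlope I m k) := le_min ?_ hmk
      _ ≤ chordSlope I j k := min_chordSlope_le_chordSlope I hjm hk.1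
    exact hmk.trans ((chordSlope_le_chordSlope_of_isMax_of_gt hm hmax hk).trans
      (chordSlope_le_chordSlope_of_isMax_of_lt hm hmax ⟨hj.1, hjm⟩))
  · exact leftSlope_le_chordSlope I ⟨hmj, hj.2⟩

end FirstVertex

theorem Finset.sum_Ioo_eq_sum_Ioc_add_sum_Ioo {M : Type*} [AddCommMonoid M] (f : ℕ → M)
    {a m b : ℕ} (ham : a ≤ m) (hmb : m < b) :
    ∑ k ∈ Ioo a b, f k = ∑ k ∈ Ioc a m, f k + ∑ k ∈ Ioo m b, f k := by
  have hsplit : Ioo a b = Ioc a m ∪ Ioo m b := by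
    ext k
    simp only [mem_Ioo, mem_Ioc, mem_union]
    omega
  rw [hsplit, sum_union (disjoint_left.2 fun k hk hk' => by
    simp only [mem_Ioc, mem_Ioo] at hk hk'
    omega)]

theorem sum_max_leftSlope_sub_rightSlope (I : ℕ → ℝ) {a b : ℕ} (hab : a < b) :
    ∑ k ∈ Ioo a b, max (leftSlope I a k - rightSlope I k b) 0
      = rightSlope I a b - leftSlope I a b := by
  induction a using Nat.strong_decreasing_induction with
  | base => exact ⟨b, fun _ hba h => absurd h (by omega)⟩
  | step a ih =>
  obtain ⟨m, hm, hmax⟩ :=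
    Set.exists_max_image _ (chordSlope I a) (Set.finite_Ioc a b) (Set.nonempty_Ioc.2 hab)
  replace hmax : IsMaxOn (chordSlope I a) (Set.Ioc a b) m := isMaxOn_iff.2 hmax
  have hvanish : ∀ k ∈ Ioo a m, max (leftSlope I a k - rightSlope I k b) 0 = 0 := fun k hk =>
    max_eq_right (sub_nonpos.2 (leftSlope_le_rightSlope_of_lt_isMax hm hmax (mem_Ioo.1 hk)))
  rw [rightSlope_eq_chordSlope_of_isMax hm hmax]
  rcases hm.2.eq_or_lt with rfl | hmb
  · rw [sum_eq_zero hvanish, leftSlope_eq_chordSlope_of_isMax hm hmax, sub_self]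
  have hvertex : ∑ k ∈ Ioc a m, max (leftSlope I a k - rightSlope I k b) 0
      = chordSlope I a m - rightSlope I m b := by
    rw [sum_eq_single_of_mem m (right_mem_Ioc.2 hm.1) fun k hk hkm =>
        hvanish k (mem_Ioo.2 ⟨(mem_Ioc.1 hk).1, (mem_Ioc.1 hk).2.lt_of_ne hkm⟩),
      leftSlope_eq_chordSlope_of_isMax hm hmax]
    exact max_eq_left (sub_nonneg.2 ((rightSlope_le_iff I hmb).2 fun _ hj =>
      chordSlope_le_chordSlope_of_isMax_of_gt hm hmax hj))
  have htail : ∑ k ∈ Ioo m b, max (leftSlope I a k - rightSlope I k b) 0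
      = rightSlope I m b - leftSlope I a b := by
    rw [leftSlope_eq_of_isMax hm hmax ⟨hmb, le_rfl⟩, ← ih m hm.1 hmb]
    exact sum_congr rfl fun k hk => by
      rw [leftSlope_eq_of_isMax hm hmax ⟨(mem_Ioo.1 hk).1, (mem_Ioo.1 hk).2.le⟩]
  rw [sum_Ioo_eq_sum_Ioc_add_sum_Ioo _ hm.1.le hmb, hvertex, htail]
  ring

/-- deterministic telescoping identity for the concave majorant.
For any `I : {0,…,N} → ℝ` with `I 0 = 0`,
`∑_{k=1}^{N-1} (γ_k^- - γ_k^+)₊ = γ_0^+ - γ_N^-`. -/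
theorem stmt_8 (N : ℕ) (hN : 1 ≤ N) (I : ℕ → ℝ) (hI0 : I 0 = 0) :
    ∑ k ∈ Finset.Icc 1 (N - 1),
      max ((sInf ((fun n : ℕ => (I k - I (k - n)) / (n : ℝ)) '' Set.Icc 1 k))
           - (sSup ((fun n : ℕ => (I (k + n) - I k) / (n : ℝ)) '' Set.Icc 1 (N - k))))
        0
      = sSup ((fun n : ℕ => I n / (n : ℝ)) '' Set.Icc 1 N)
        - sInf ((fun n : ℕ => (I N - I (N - n)) / (n : ℝ)) '' Set.Icc 1 N) := by
  have hIcc : Icc 1 (N - 1) = Ioo 0 N := by ext k; simp only [mem_Icc, mem_Ioo]; omega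
  have key := sum_max_leftSlope_sub_rightSlope I (a := 0) (b := N) hN
  simp only [leftSlope_eq_sInf, rightSlope_eq_sSup, Nat.sub_zero, zero_add, hI0, sub_zero] at key
  rwa [hIcc]
end

section
/- Let (I_n)_{n∈ℤ} be a centered Gaussian process with I_0 = 0 such that (I_n)_{n∈ℤ} has the same law as (I_{−n})_{n∈ℤ} and, for every n_0 ∈ ℤ, (I_{n_0+n} − I_{n_0} − n·T_{n_0})_{n∈ℤ} has the same law as (I_n)_{n∈ℤ} for some random variables T_{n_0} with E[T_{n_0}] = 0. Then E[−min_{1≤n≤N} (I_N − I_{N−n})/n] = E[max_{1≤n≤N} I_n/n], and consequently, with F_N = Σ_{k=1}^{N−1} max(γ_k^− − γ_k^+, 0) as in the concave-majorant telescoping identity, E[F_N] = 2·E[max_{1≤n≤N} I_n/n]. -/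
open MeasureTheory ProbabilityTheory

/-- A real-valued family `X` is a centered Gaussian family if every finite linear
combination of its members has a centered Gaussian distribution. -/
def IsCenteredGaussianFamily {Ω : Type*} [MeasurableSpace Ω] (P : Measure Ω)
    {T : Type*} (X : T → Ω → ℝ) : Prop :=
  ∀ (m : ℕ) (t : Fin m → T) (c : Fin m → ℝ), ∃ v : NNReal,
    Measure.map (fun ω => ∑ i, c i * X (t i) ω) P = gaussianReal 0 v

/-!
Pointwise, `F_N = γ_0^+ - γ_N^-`. Let `d_k = min_{i<k} max_{k≤j≤N} slope(i, j)` be the slope on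
`[k - 1, k]` of the least concave majorant of `(I_n)_{0≤n≤N}`. Comparing chords through `k`, each
summand `max(γ_k^- - γ_k^+, 0)` equals `d_k - d_{k+1}`, and `d_1 = γ_0^+`, `d_N = γ_N^-`, so the sum
telescopes.

In law, shifting at `n₀ = N` and then reflecting `n ↦ -n` turns `(I_n)` into
`(I_{N-n} - I_N + n T_N)`, for which `max_{1≤n≤N} (·)_n / n` equals `-γ_N^- + T_N`. As `E[T_N] = 0`,
this gives `E[-γ_N^-] = E[γ_0^+]`, and then `E[F_N] = 2 E[γ_0^+]`.
-/

open Set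

section IccExtrema

variable {f : ℤ → ℝ} {a b i : ℤ} {x : ℝ}

lemma bddAbove_image_Icc : BddAbove (f '' Icc a b) := ((finite_Icc a b).image f).bddAbove

lemma bddBelow_image_Icc : BddBelow (f '' Icc a b) := ((finite_Icc a b).image f).bddBelow

lemma le_csSup_image_Icc (hi : i ∈ Icc a b) : f i ≤ sSup (f '' Icc a b) :=
  le_csSup bddAbove_image_Icc (mem_image_of_mem f hi)

lemma csInf_image_Icc_le (hi : i ∈ Icc a b) : sInf (f '' Icc a b) ≤ f i :=
  csInf_le bddBelow_image_Icc (mem_image_of_mem f hi)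

lemma csSup_image_Icc_le (hab : a ≤ b) (h : ∀ i ∈ Icc a b, f i ≤ x) :
    sSup (f '' Icc a b) ≤ x :=
  csSup_le ((nonempty_Icc.mpr hab).image f) (forall_mem_image.mpr h)

lemma le_csInf_image_Icc (hab : a ≤ b) (h : ∀ i ∈ Icc a b, x ≤ f i) :
    x ≤ sInf (f '' Icc a b) :=
  le_csInf ((nonempty_Icc.mpr hab).image f) (forall_mem_image.mpr h)

lemma exists_mem_Icc_eq_csInf_image (hab : a ≤ b) : ∃ i ∈ Icc a b, f i = sInf (f '' Icc a b) :=
  ((nonempty_Icc.mpr hab).image f).csInf_mem ((finite_Icc a b).image f)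

lemma exists_mem_Icc_eq_csSup_image (hab : a ≤ b) : ∃ i ∈ Icc a b, f i = sSup (f '' Icc a b) :=
  ((nonempty_Icc.mpr hab).image f).csSup_mem ((finite_Icc a b).image f)

lemma csSup_image_Icc_eq_max (hab : a < b) :
    sSup (f '' Icc a b) = max (f a) (sSup (f '' Icc (a + 1) b)) := by
  rw [← insert_Icc_add_one_left_eq_Icc hab.le, image_insert_eq,
    csSup_insert bddAbove_image_Icc ((nonempty_Icc.mpr (by omega)).image f)]

lemma csInf_image_Icc_eq_min (hab : a < b) :
    sInf (f '' Icc a b) = min (f b) (sInf (f '' Icc a (b - 1))) := by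
  rw [← insert_Icc_sub_one_right_eq_Icc hab.le, image_insert_eq,
    csInf_insert bddBelow_image_Icc ((nonempty_Icc.mpr (by omega)).image f)]

end IccExtrema

lemma Finset.sum_Icc_sub_add_one (f : ℤ → ℝ) {N : ℤ} (hN : 1 ≤ N) :
    ∑ k ∈ Finset.Icc 1 (N - 1), (f k - f (k + 1)) = f 1 - f N := by
  induction N, hN using Int.leInduction with
  | base => simp
  | succ n hn ih =>
    rw [add_sub_cancel_right, ← Finset.insert_Icc_sub_one_right_eq_Icc hn,
      Finset.sum_insert (by simp), ih]
    ring

namespace ConcaveMajorant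

variable (a : ℤ → ℝ)

noncomputable def chordSlope (i j : ℤ) : ℝ := (a j - a i) / (j - i)

/-- `γ_k^-` of the paper, indexed by the left endpoint `i = k - n` of the chord. -/
noncomputable def leftSlope (k : ℤ) : ℝ := sInf ((fun i => chordSlope a i k) '' Icc 0 (k - 1))

/-- `γ_k^+` of the paper, indexed by the right endpoint `j = k + n` of the chord. -/
noncomputable def rightSlope (N k : ℤ) : ℝ := sSup ((fun j => chordSlope a k j) '' Icc (k + 1) N)

noncomputable def maxChordSlope (N k i : ℤ) : ℝ := sSup ((fun j => chordSlope a i j) '' Icc k N)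

/-- The slope on `[k - 1, k]` of the least concave majorant of `a` on `{0, …, N}`,
by the minimax formula. -/
noncomputable def majorantSlope (N k : ℤ) : ℝ :=
  sInf ((fun i => maxChordSlope a N k i) '' Icc 0 (k - 1))

variable {a} {N i j k : ℤ}

lemma mul_chordSlope (hij : i ≠ j) : ((j : ℝ) - i) * chordSlope a i j = a j - a i := by
  have : ((j : ℝ) - i) ≠ 0 := sub_ne_zero.mpr (by exact_mod_cast hij.symm)
  rw [chordSlope, mul_div_cancel₀ _ this]

lemma chordSlope_le_max (hik : i < k) (hkj : k < j) :
    chordSlope a i j ≤ max (chordSlope a i k) (chordSlope a k j) := by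
  have hik' : (i : ℝ) < k := by exact_mod_cast hik
  have hkj' : (k : ℝ) < j := by exact_mod_cast hkj
  refine le_of_mul_le_mul_left ?_ (sub_pos.mpr (hik'.trans hkj'))
  calc ((j : ℝ) - i) * chordSlope a i j
      = (k - i) * chordSlope a i k + (j - k) * chordSlope a k j := by
        rw [mul_chordSlope hik.ne, mul_chordSlope hkj.ne, mul_chordSlope (hik.trans hkj).ne]; ring
    _ ≤ (k - i) * max (chordSlope a i k) (chordSlope a k j)
        + (j - k) * max (chordSlope a i k) (chordSlope a k j) := by
        gcongr
        exacts [le_max_left _ _, le_max_right _ _]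
    _ = (j - i) * max (chordSlope a i k) (chordSlope a k j) := by ring

lemma min_le_chordSlope (hik : i < k) (hkj : k < j) :
    min (chordSlope a i k) (chordSlope a k j) ≤ chordSlope a i j := by
  have hik' : (i : ℝ) < k := by exact_mod_cast hik
  have hkj' : (k : ℝ) < j := by exact_mod_cast hkj
  refine le_of_mul_le_mul_left ?_ (sub_pos.mpr (hik'.trans hkj'))
  calc ((j : ℝ) - i) * min (chordSlope a i k) (chordSlope a k j)
      = (k - i) * min (chordSlope a i k) (chordSlope a k j)
        + (j - k) * min (chordSlope a i k) (chordSlope a k j) := by ring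
    _ ≤ (k - i) * chordSlope a i k + (j - k) * chordSlope a k j := by
        gcongr
        exacts [min_le_left _ _, min_le_right _ _]
    _ = (j - i) * chordSlope a i j := by
        rw [mul_chordSlope hik.ne, mul_chordSlope hkj.ne, mul_chordSlope (hik.trans hkj).ne]; ring

lemma maxChordSlope_eq_max (hkN : k < N) :
    maxChordSlope a N k i = max (chordSlope a i k) (maxChordSlope a N (k + 1) i) :=
  csSup_image_Icc_eq_max hkN

lemma majorantSlope_succ (hk : 1 ≤ k) :
    majorantSlope a N (k + 1) =
      min (rightSlope a N k) (sInf ((fun i => maxChordSlope a N (k + 1) i) '' Icc 0 (k - 1))) := by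
  rw [majorantSlope, add_sub_cancel_right, csInf_image_Icc_eq_min (by omega)]
  rfl

lemma maxChordSlope_succ_le (hik : i < k) (hkN : k < N) :
    maxChordSlope a N (k + 1) i ≤ max (chordSlope a i k) (rightSlope a N k) :=
  csSup_image_Icc_le (by omega) fun j hj =>
    (chordSlope_le_max hik (by grind)).trans (max_le_max_left _ (le_csSup_image_Icc hj))

lemma min_le_maxChordSlope_succ (hik : i < k) (hkN : k < N) :
    min (chordSlope a i k) (rightSlope a N k) ≤ maxChordSlope a N (k + 1) i := by
  obtain ⟨j, hj, hjmax⟩ := exists_mem_Icc_eq_csSup_image (f := fun j => chordSlope a k j)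
    (by omega : k + 1 ≤ N)
  calc min (chordSlope a i k) (rightSlope a N k) = min (chordSlope a i k) (chordSlope a k j) := by
        rw [rightSlope, ← hjmax]
    _ ≤ chordSlope a i j := min_le_chordSlope hik (by grind)
    _ ≤ maxChordSlope a N (k + 1) i := le_csSup_image_Icc hj

lemma majorantSlope_eq_leftSlope (hkN : k < N) (h : rightSlope a N k ≤ leftSlope a k) :
    majorantSlope a N k = leftSlope a k := by
  refine congrArg sInf (image_congr fun i hi => ?_)
  have hik : rightSlope a N k ≤ chordSlope a i k := h.trans (csInf_image_Icc_le hi)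
  rw [maxChordSlope_eq_max hkN, max_eq_left]
  exact (maxChordSlope_succ_le (i := i) (by grind) hkN).trans (max_le le_rfl hik)

lemma majorantSlope_succ_eq_rightSlope (hk : 1 ≤ k) (hkN : k < N)
    (h : rightSlope a N k ≤ leftSlope a k) :
    majorantSlope a N (k + 1) = rightSlope a N k := by
  refine (majorantSlope_succ hk).trans (min_eq_left (le_csInf_image_Icc (by omega) fun i hi => ?_))
  have hik : rightSlope a N k ≤ chordSlope a i k := h.trans (csInf_image_Icc_le hi)
  simpa [min_eq_right hik] using min_le_maxChordSlope_succ (a := a) (i := i) (by grind) hkN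

lemma majorantSlope_le_rightSlope (hk : 1 ≤ k) (hkN : k < N)
    (h : leftSlope a k < rightSlope a N k) : majorantSlope a N k ≤ rightSlope a N k := by
  obtain ⟨i, hi, hmin⟩ := exists_mem_Icc_eq_csInf_image (f := fun i => chordSlope a i k)
    (by omega : (0 : ℤ) ≤ k - 1)
  have hik : chordSlope a i k ≤ rightSlope a N k := hmin ▸ h.le
  calc majorantSlope a N k ≤ maxChordSlope a N k i := csInf_image_Icc_le hi
    _ = max (chordSlope a i k) (maxChordSlope a N (k + 1) i) := maxChordSlope_eq_max hkN
    _ ≤ rightSlope a N k :=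
        max_le hik ((maxChordSlope_succ_le (by grind) hkN).trans (max_le hik le_rfl))

lemma majorantSlope_succ_eq_of_lt (hk : 1 ≤ k) (hkN : k < N)
    (h : leftSlope a k < rightSlope a N k) :
    majorantSlope a N (k + 1) = majorantSlope a N k := by
  rw [majorantSlope_succ hk]
  apply le_antisymm
  · refine le_csInf_image_Icc (by omega) fun i hi => ?_
    rw [maxChordSlope_eq_max hkN]
    exact (min_le_right _ _).trans ((csInf_image_Icc_le hi).trans (le_max_right _ _))
  · have hright := majorantSlope_le_rightSlope hk hkN h
    refine le_min hright (le_csInf_image_Icc (by omega) fun i hi => ?_)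
    have hleft : majorantSlope a N k ≤ max (chordSlope a i k) (maxChordSlope a N (k + 1) i) :=
      maxChordSlope_eq_max hkN ▸ csInf_image_Icc_le hi
    calc majorantSlope a N k
        ≤ min (max (chordSlope a i k) (maxChordSlope a N (k + 1) i)) (rightSlope a N k) :=
          le_min hleft hright
      _ ≤ maxChordSlope a N (k + 1) i := by
          rw [min_max_distrib_right]
          exact max_le (min_le_maxChordSlope_succ (by grind) hkN) (min_le_left _ _)

lemma max_leftSlope_sub_rightSlope (hk : 1 ≤ k) (hkN : k < N) :
    max (leftSlope a k - rightSlope a N k) 0 = majorantSlope a N k - majorantSlope a N (k + 1) := by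
  rcases le_or_gt (rightSlope a N k) (leftSlope a k) with h | h
  · rw [max_eq_left (sub_nonneg.mpr h), majorantSlope_eq_leftSlope hkN h,
      majorantSlope_succ_eq_rightSlope hk hkN h]
  · rw [max_eq_right (sub_nonpos.mpr h.le), majorantSlope_succ_eq_of_lt hk hkN h, sub_self]

lemma leftSlope_eq (k : ℤ) :
    leftSlope a k = sInf ((fun n : ℤ => (a k - a (k - n)) / (n : ℝ)) '' Icc 1 k) := by
  have : (fun n : ℤ => (a k - a (k - n)) / (n : ℝ)) = (fun i => chordSlope a i k) ∘ (k - ·) := by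
    funext n
    simp [chordSlope]
  rw [this, image_comp, image_const_sub_Icc, sub_self, leftSlope]

lemma rightSlope_eq (N k : ℤ) :
    rightSlope a N k = sSup ((fun n : ℤ => (a (k + n) - a k) / (n : ℝ)) '' Icc 1 (N - k)) := by
  have : (fun n : ℤ => (a (k + n) - a k) / (n : ℝ)) = (fun j => chordSlope a k j) ∘ (k + ·) := by
    funext n
    simp [chordSlope]
  rw [this, image_comp, image_const_add_Icc, add_sub_cancel, rightSlope]

lemma majorantSlope_self (N : ℤ) : majorantSlope a N N = leftSlope a N := by
  refine congrArg sInf (image_congr fun i _ => ?_)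
  rw [maxChordSlope, Icc_self, image_singleton, csSup_singleton]

lemma majorantSlope_one (ha0 : a 0 = 0) (N : ℤ) :
    majorantSlope a N 1 = sSup ((fun n : ℤ => a n / (n : ℝ)) '' Icc 1 N) := by
  rw [majorantSlope, sub_self, Icc_self, image_singleton, csInf_singleton, maxChordSlope]
  simp [chordSlope, ha0]

theorem sum_max_sInf_sub_sSup_eq (ha0 : a 0 = 0) (hN : 1 ≤ N) :
    ∑ k ∈ Finset.Icc 1 (N - 1),
      max (sInf ((fun n : ℤ => (a k - a (k - n)) / (n : ℝ)) '' Icc 1 k)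
        - sSup ((fun n : ℤ => (a (k + n) - a k) / (n : ℝ)) '' Icc 1 (N - k))) 0
      = sSup ((fun n : ℤ => a n / (n : ℝ)) '' Icc 1 N)
        - sInf ((fun n : ℤ => (a N - a (N - n)) / (n : ℝ)) '' Icc 1 N) := by
  rw [← majorantSlope_one ha0, ← leftSlope_eq, ← majorantSlope_self,
    ← Finset.sum_Icc_sub_add_one _ hN]
  refine Finset.sum_congr rfl fun k hk => ?_
  rw [Finset.mem_Icc] at hk
  rw [← leftSlope_eq, ← rightSlope_eq, max_leftSlope_sub_rightSlope hk.1 (by omega)]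

end ConcaveMajorant

section FiniteExtrema

variable {Ω ι : Type*} [MeasurableSpace Ω] {P : Measure Ω}

lemma measurable_csSup_image [Countable ι] (s : Set ι) {f : ι → Ω → ℝ}
    (hf : ∀ i, Measurable (f i)) : Measurable fun ω => sSup ((fun i => f i ω) '' s) := by
  simp_rw [sSup_image']
  exact Measurable.iSup fun i => hf i

lemma integrable_csSup_image {s : Set ι} (hfin : s.Finite) (hs : s.Nonempty) {f : ι → Ω → ℝ}
    (hf : ∀ i, Integrable (f i) P) : Integrable (fun ω => sSup ((fun i => f i ω) '' s)) P := by
  lift s to Finset ι using hfin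
  replace hs := Finset.coe_nonempty.mp hs
  simp_rw [← Finset.sup'_eq_csSup_image s hs]
  induction hs using Finset.Nonempty.cons_induction with
  | singleton i => simpa using hf i
  | cons i s _ hs ih =>
    simp only [Finset.sup'_cons hs]
    exact (hf i).sup ih

lemma integrable_csInf_image {s : Set ι} (hfin : s.Finite) (hs : s.Nonempty) {f : ι → Ω → ℝ}
    (hf : ∀ i, Integrable (f i) P) : Integrable (fun ω => sInf ((fun i => f i ω) '' s)) P := by
  lift s to Finset ι using hfin
  replace hs := Finset.coe_nonempty.mp hs
  simp_rw [← Finset.inf'_eq_csInf_image s hs]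
  induction hs using Finset.Nonempty.cons_induction with
  | singleton i => simpa using hf i
  | cons i s _ hs ih =>
    simp only [Finset.inf'_cons hs]
    exact (hf i).inf ih

lemma csSup_image_neg_add {s : Set ι} (hs : s.Nonempty) {f : ι → ℝ} (hf : BddBelow (f '' s))
    (c : ℝ) : sSup ((fun i => -f i + c) '' s) = -sInf (f '' s) + c := by
  rw [← image_image (fun y => -y + c) f, ← Antitone.map_csInf_of_continuousAt (by fun_prop)
    (fun x y h => by linarith) (hs.image f) hf]

end FiniteExtrema

lemma IsCenteredGaussianFamily.map_eq_gaussianReal {Ω ι : Type*} [MeasurableSpace Ω]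
    {P : Measure Ω} {X : ι → Ω → ℝ} (h : IsCenteredGaussianFamily P X) (t : ι) :
    ∃ v : NNReal, P.map (X t) = gaussianReal 0 v := by
  obtain ⟨v, hv⟩ := h 1 (fun _ => t) (fun _ => 1)
  exact ⟨v, by simpa using hv⟩

lemma IsCenteredGaussianFamily.integrable {Ω ι : Type*} [MeasurableSpace Ω]
    {P : Measure Ω} {X : ι → Ω → ℝ} (h : IsCenteredGaussianFamily P X) (t : ι) :
    Integrable (X t) P := by
  obtain ⟨v, hv⟩ := h.map_eq_gaussianReal t
  have hmeas : AEMeasurable (X t) P := .of_map_ne_zero (hv ▸ IsProbabilityMeasure.ne_zero _)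
  have : Integrable id (P.map (X t)) := hv ▸ (memLp_id_gaussianReal 1).integrable le_rfl
  exact (integrable_map_measure aestronglyMeasurable_id hmeas).mp this

section ShiftInvariance

variable {Ω : Type*} [MeasurableSpace Ω] {P : Measure Ω} [IsProbabilityMeasure P]
  {I T : ℤ → Ω → ℝ}

lemma identDistrib_shift (hI : ∀ n, AEMeasurable (I n) P) (n₀ : ℤ)
    (hshift : Measure.map (fun ω => fun n : ℤ => I (n₀ + n) ω - I n₀ ω - (n : ℝ) * T n₀ ω) P
      = Measure.map (fun ω => fun n : ℤ => I n ω) P) :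
    IdentDistrib (fun ω => fun n : ℤ => I (n₀ + n) ω - I n₀ ω - (n : ℝ) * T n₀ ω)
      (fun ω => fun n : ℤ => I n ω) P P := by
  have hproc : AEMeasurable (fun ω => fun n : ℤ => I n ω) P := aemeasurable_pi_lambda _ hI
  have : IsProbabilityMeasure (P.map fun ω => fun n : ℤ => I n ω) :=
    Measure.isProbabilityMeasure_map hproc
  exact ⟨.of_map_ne_zero (hshift ▸ IsProbabilityMeasure.ne_zero _), hproc, hshift⟩

lemma identDistrib_reflect_shift (hI : ∀ n, AEMeasurable (I n) P)
    (hsymm : Measure.map (fun ω => fun n : ℤ => I (-n) ω) P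
      = Measure.map (fun ω => fun n : ℤ => I n ω) P) (n₀ : ℤ)
    (hshift : Measure.map (fun ω => fun n : ℤ => I (n₀ + n) ω - I n₀ ω - (n : ℝ) * T n₀ ω) P
      = Measure.map (fun ω => fun n : ℤ => I n ω) P) :
    IdentDistrib (fun ω => fun n : ℤ => I (n₀ - n) ω - I n₀ ω + (n : ℝ) * T n₀ ω)
      (fun ω => fun n : ℤ => I n ω) P P := by
  have hproc : AEMeasurable (fun ω => fun n : ℤ => I n ω) P := aemeasurable_pi_lambda _ hI
  have hrefl : Measurable fun (x : ℤ → ℝ) (n : ℤ) => x (-n) :=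
    measurable_pi_lambda _ fun n => measurable_pi_apply (-n)
  have hsymm' : IdentDistrib (fun ω => fun n : ℤ => I (-n) ω) (fun ω => fun n : ℤ => I n ω) P P :=
    ⟨hrefl.comp_aemeasurable hproc, hproc, hsymm⟩
  convert ((identDistrib_shift hI n₀ hshift).comp hrefl).trans hsymm' using 1
  funext ω n
  simp only [Function.comp_apply, Int.cast_neg, ← sub_eq_add_neg]
  ring

lemma integrable_drift_of_map_shift_eq (hI : ∀ n, Integrable (I n) P) (n₀ : ℤ)
    (hshift : Measure.map (fun ω => fun n : ℤ => I (n₀ + n) ω - I n₀ ω - (n : ℝ) * T n₀ ω) P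
      = Measure.map (fun ω => fun n : ℤ => I n ω) P) :
    Integrable (T n₀) P := by
  have hstep : Integrable (fun ω => I (n₀ + 1) ω - I n₀ ω - ((1 : ℤ) : ℝ) * T n₀ ω) P :=
    ((identDistrib_shift (fun n => (hI n).aemeasurable) n₀ hshift).comp
      (measurable_pi_apply 1)).integrable_iff.mpr (hI 1)
  convert ((hI (n₀ + 1)).sub (hI n₀)).sub hstep using 1
  funext ω
  simp

theorem integral_neg_sInf_eq_integral_sSup (hI : ∀ n, Integrable (I n) P)
    (hsymm : Measure.map (fun ω => fun n : ℤ => I (-n) ω) P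
      = Measure.map (fun ω => fun n : ℤ => I n ω) P) {m : ℤ} (hm : 1 ≤ m)
    (hT : ∫ ω, T m ω ∂P = 0)
    (hshift : Measure.map (fun ω => fun n : ℤ => I (m + n) ω - I m ω - (n : ℝ) * T m ω) P
      = Measure.map (fun ω => fun n : ℤ => I n ω) P) :
    ∫ ω, -sInf ((fun n : ℤ => (I m ω - I (m - n) ω) / (n : ℝ)) '' Icc 1 m) ∂P
      = ∫ ω, sSup ((fun n : ℤ => I n ω / (n : ℝ)) '' Icc 1 m) ∂P := by
  have hΦ : Measurable fun x : ℤ → ℝ => sSup ((fun n : ℤ => x n / (n : ℝ)) '' Icc 1 m) :=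
    measurable_csSup_image _ fun n => (measurable_pi_apply n).div_const _
  have hlaw := (identDistrib_reflect_shift (fun n => (hI n).aemeasurable) hsymm m hshift).comp hΦ
  have hpt : ∀ ω, sSup ((fun n : ℤ => (I (m - n) ω - I m ω + n * T m ω) / (n : ℝ)) '' Icc 1 m)
      = -sInf ((fun n : ℤ => (I m ω - I (m - n) ω) / (n : ℝ)) '' Icc 1 m) + T m ω := by
    intro ω
    rw [← csSup_image_neg_add (nonempty_Icc.mpr hm) bddBelow_image_Icc]
    refine congrArg sSup (image_congr fun n hn => ?_)
    have : (n : ℝ) ≠ 0 := by exact_mod_cast (show n ≠ 0 by grind)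
    field_simp
    ring
  have hinf := integrable_csInf_image (finite_Icc 1 m) (nonempty_Icc.mpr hm)
    (f := fun n ω => (I m ω - I (m - n) ω) / (n : ℝ))
    fun n => ((hI m).sub (hI (m - n))).div_const (n : ℝ)
  have hsum := hlaw.integral_eq
  simp only [Function.comp_def, hpt] at hsum
  rw [← hsum, integral_add hinf.fun_neg (integrable_drift_of_map_shift_eq hI m hshift), hT,
    add_zero]

end ShiftInvariance

theorem stmt_9_general {Ω : Type*} [MeasurableSpace Ω] (P : Measure Ω) [IsProbabilityMeasure P]
    (I : ℤ → Ω → ℝ)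
    (hGauss : IsCenteredGaussianFamily P I)
    (hI0 : ∀ ω, I 0 ω = 0)
    (hsymm : Measure.map (fun ω => fun n : ℤ => I (-n) ω) P
      = Measure.map (fun ω => fun n : ℤ => I n ω) P)
    (T : ℤ → Ω → ℝ)
    (hTcentered : ∀ n₀ : ℤ, ∫ ω, T n₀ ω ∂P = 0)
    (hshift : ∀ n₀ : ℤ,
      Measure.map (fun ω => fun n : ℤ => I (n₀ + n) ω - I n₀ ω - (n : ℝ) * T n₀ ω) P
        = Measure.map (fun ω => fun n : ℤ => I n ω) P)
    (N : ℕ) (hN : 1 ≤ N) :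
    (∫ ω, -sInf ((fun n : ℤ => (I N ω - I ((N : ℤ) - n) ω) / (n : ℝ)) '' Set.Icc 1 (N : ℤ)) ∂P
        = ∫ ω, sSup ((fun n : ℤ => I n ω / (n : ℝ)) '' Set.Icc 1 (N : ℤ)) ∂P) ∧
    (∫ ω, (∑ k ∈ Finset.Icc (1 : ℤ) ((N : ℤ) - 1),
        max ((sInf ((fun n : ℤ => (I k ω - I (k - n) ω) / (n : ℝ)) '' Set.Icc 1 k))
             - (sSup ((fun n : ℤ => (I (k + n) ω - I k ω) / (n : ℝ)) '' Set.Icc 1 ((N : ℤ) - k))))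
          0) ∂P
      = 2 * ∫ ω, sSup ((fun n : ℤ => I n ω / (n : ℝ)) '' Set.Icc 1 (N : ℤ)) ∂P) := by
  have hI : ∀ n, Integrable (I n) P := hGauss.integrable
  have hN' : (1 : ℤ) ≤ N := by exact_mod_cast hN
  have hreflect := integral_neg_sInf_eq_integral_sSup hI hsymm hN' (hTcentered N) (hshift N)
  refine ⟨hreflect, ?_⟩
  have hsup := integrable_csSup_image (finite_Icc 1 (N : ℤ)) (nonempty_Icc.mpr hN')
    (f := fun n ω => I n ω / (n : ℝ)) fun n => (hI n).div_const (n : ℝ)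
  have hinf := integrable_csInf_image (finite_Icc 1 (N : ℤ)) (nonempty_Icc.mpr hN')
    (f := fun n ω => (I N ω - I (N - n) ω) / (n : ℝ))
    fun n => ((hI N).sub (hI (N - n))).div_const (n : ℝ)
  calc _ = ∫ ω, (sSup ((fun n : ℤ => I n ω / (n : ℝ)) '' Icc 1 (N : ℤ))
          + -sInf ((fun n : ℤ => (I N ω - I ((N : ℤ) - n) ω) / (n : ℝ)) '' Icc 1 (N : ℤ))) ∂P := by
        refine integral_congr_ae (ae_of_all _ fun ω => ?_)
        exact (ConcaveMajorant.sum_max_sInf_sub_sSup_eq (a := fun n => I n ω) (hI0 ω) hN').trans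
          (sub_eq_add_neg _ _)
    _ = 2 * ∫ ω, sSup ((fun n : ℤ => I n ω / (n : ℝ)) '' Icc 1 (N : ℤ)) ∂P := by
        rw [integral_add hsup hinf.fun_neg, hreflect, two_mul]

/-- under the symmetry and shift properties of `(I_n)`,
`E[-min_{1≤n≤N}(I_N - I_{N-n})/n] = E[max_{1≤n≤N} I_n/n]` and `E[F_N] = 2E[max_{1≤n≤N} I_n/n]`. -/
theorem stmt_9 {Ω : Type*} [MeasurableSpace Ω] (P : Measure Ω) [IsProbabilityMeasure P]
    (I : ℤ → Ω → ℝ) (hMeas : ∀ n, Measurable (I n))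
    (hGauss : IsCenteredGaussianFamily P I)
    (hI0 : ∀ ω, I 0 ω = 0)
    (hsymm : Measure.map (fun ω => fun n : ℤ => I (-n) ω) P
      = Measure.map (fun ω => fun n : ℤ => I n ω) P)
    (T : ℤ → Ω → ℝ)
    (hTcentered : ∀ n₀ : ℤ, ∫ ω, T n₀ ω ∂P = 0)
    (hshift : ∀ n₀ : ℤ,
      Measure.map (fun ω => fun n : ℤ => I (n₀ + n) ω - I n₀ ω - (n : ℝ) * T n₀ ω) P
        = Measure.map (fun ω => fun n : ℤ => I n ω) P)
    (N : ℕ) (hN : 1 ≤ N) :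
    (∫ ω, -sInf ((fun n : ℤ => (I N ω - I ((N : ℤ) - n) ω) / (n : ℝ)) '' Set.Icc 1 (N : ℤ)) ∂P
        = ∫ ω, sSup ((fun n : ℤ => I n ω / (n : ℝ)) '' Set.Icc 1 (N : ℤ)) ∂P) ∧
    (∫ ω, (∑ k ∈ Finset.Icc (1 : ℤ) ((N : ℤ) - 1),
        max ((sInf ((fun n : ℤ => (I k ω - I (k - n) ω) / (n : ℝ)) '' Set.Icc 1 k))
             - (sSup ((fun n : ℤ => (I (k + n) ω - I k ω) / (n : ℝ)) '' Set.Icc 1 ((N : ℤ) - k))))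
          0) ∂P
      = 2 * ∫ ω, sSup ((fun n : ℤ => I n ω / (n : ℝ)) '' Set.Icc 1 (N : ℤ)) ∂P) :=
  stmt_9_general P I hGauss hI0 hsymm T hTcentered hshift N hN
end

section
/- Let (I_n)_{n∈ℤ} be a stochastic process with I_0=0 satisfying: for every k ∈ ℤ there exists a random variable T_k such that (I_{k+n} − I_k − n T_k)_{n∈ℤ} has the same law as (I_n)_{n∈ℤ}. For k, m ≥ 1 set γ_{k,m}^− = min_{1≤n≤m} (I_k − I_{k−n})/n and γ_{k,m}^+ = max_{1≤n≤m} (I_{k+n} − I_k)/n, and ϑ_m = max(γ_{0,m}^− − γ_{0,m}^+, 0). Then for 1 ≤ k ≤ N−1, E[max(γ_{k,k}^− − γ_{k,N−k}^+, 0)] ≥ E[ϑ_N]. -/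
/-!
Recentring the process at `k` subtracts the same slope `T k` from every chord slope, so the
difference `γ⁻ - γ⁺` of the recentred path equals `γ_{k,N}^- - γ_{k,N}^+`; by the shift property
this has the law of `γ_{0,N}^- - γ_{0,N}^+`. Shrinking the windows to `k` and `N - k` can only
increase `γ⁻` and decrease `γ⁺`.
-/

open MeasureTheory ProbabilityTheory

lemma ProbabilityTheory.identDistrib_of_map_eq {Ω β : Type*} [MeasurableSpace Ω]
    [MeasurableSpace β] {μ : Measure Ω} [NeZero μ] {X Y : Ω → β} (hY : AEMeasurable Y μ)
    (h : μ.map X = μ.map Y) : IdentDistrib X Y μ μ where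
  aemeasurable_fst := .of_map_ne_zero (h ▸ (Measure.map_ne_zero_iff hY).2 (NeZero.ne μ))
  aemeasurable_snd := hY
  map_eq := h

/- `leftSlopeInf f k m` and `rightSlopeSup f k m` are `γ_{k,m}^-` and `γ_{k,m}^+` of the path `f`. -/
noncomputable def leftSlopeInf (f : ℤ → ℝ) (k m : ℤ) : ℝ :=
  sInf ((fun n : ℤ => (f k - f (k - n)) / n) '' Set.Icc 1 m)

noncomputable def rightSlopeSup (f : ℤ → ℝ) (k m : ℤ) : ℝ :=
  sSup ((fun n : ℤ => (f (k + n) - f k) / n) '' Set.Icc 1 m)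

lemma measurable_leftSlopeInf (k m : ℤ) : Measurable fun f => leftSlopeInf f k m := by
  simp_rw [leftSlopeInf, sInf_image']
  exact .iInf fun n => by fun_prop

lemma measurable_rightSlopeSup (k m : ℤ) : Measurable fun f => rightSlopeSup f k m := by
  simp_rw [rightSlopeSup, sSup_image']
  exact .iSup fun n => by fun_prop

section Slopes

variable (f : ℤ → ℝ) (k : ℤ) {m m' : ℤ}

lemma leftSlopeInf_anti (hm : 1 ≤ m) (hmm' : m ≤ m') :
    leftSlopeInf f k m' ≤ leftSlopeInf f k m :=
  csInf_le_csInf ((Set.finite_Icc _ _).image _).bddBelow ((Set.nonempty_Icc.2 hm).image _)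
    (Set.image_mono (Set.Icc_subset_Icc_right hmm'))

lemma rightSlopeSup_mono (hm : 1 ≤ m) (hmm' : m ≤ m') :
    rightSlopeSup f k m ≤ rightSlopeSup f k m' :=
  csSup_le_csSup ((Set.finite_Icc _ _).image _).bddAbove ((Set.nonempty_Icc.2 hm).image _)
    (Set.image_mono (Set.Icc_subset_Icc_right hmm'))

lemma leftSlopeInf_recenter (t : ℝ) (hm : 1 ≤ m) :
    leftSlopeInf (fun n => f (k + n) - f k - n * t) 0 m = leftSlopeInf f k m - t := by
  rw [leftSlopeInf, leftSlopeInf, (Set.finite_Icc _ _).image _ |>.map_sInf_of_monotone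
    (f := (· - t)) (fun _ _ h => sub_le_sub_right h t) ((Set.nonempty_Icc.2 hm).image _),
    Set.image_image]
  refine congrArg _ (Set.image_congr fun n hn => ?_)
  have hn : (n : ℝ) ≠ 0 := by have := hn.1; positivity
  field_simp
  simp only [add_zero, zero_sub, Int.cast_zero, Int.cast_neg, ← sub_eq_add_neg]
  ring

lemma rightSlopeSup_recenter (t : ℝ) (hm : 1 ≤ m) :
    rightSlopeSup (fun n => f (k + n) - f k - n * t) 0 m = rightSlopeSup f k m - t := by
  rw [rightSlopeSup, rightSlopeSup, (Set.finite_Icc _ _).image _ |>.map_sSup_of_monotone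
    (f := (· - t)) (fun _ _ h => sub_le_sub_right h t) ((Set.nonempty_Icc.2 hm).image _),
    Set.image_image]
  refine congrArg _ (Set.image_congr fun n hn => ?_)
  have hn : (n : ℝ) ≠ 0 := by have := hn.1; positivity
  field_simp
  simp only [add_zero, zero_add, Int.cast_zero]
  ring

end Slopes

theorem stmt_10_general {Ω : Type*} [MeasurableSpace Ω] (P : Measure Ω) [IsProbabilityMeasure P]
    (I : ℤ → Ω → ℝ) (hMeas : ∀ n, Measurable (I n))
    (T : ℤ → Ω → ℝ)
    (hshift : ∀ k : ℤ,
      Measure.map (fun ω => fun n : ℤ => I (k + n) ω - I k ω - (n : ℝ) * T k ω) P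
        = Measure.map (fun ω => fun n : ℤ => I n ω) P)
    (N k : ℕ) (hk : 1 ≤ k) (hkN : k ≤ N - 1) :
    ∫⁻ ω, ENNReal.ofReal
        (max ((sInf ((fun n : ℤ => (I k ω - I ((k : ℤ) - n) ω) / (n : ℝ)) '' Set.Icc 1 (k : ℤ)))
              - (sSup ((fun n : ℤ => (I ((k : ℤ) + n) ω - I k ω) / (n : ℝ))
                  '' Set.Icc 1 ((N : ℤ) - k)))) 0) ∂P
      ≥ ∫⁻ ω, ENNReal.ofReal
        (max ((sInf ((fun n : ℤ => (I 0 ω - I (-n) ω) / (n : ℝ)) '' Set.Icc 1 (N : ℤ)))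
              - (sSup ((fun n : ℤ => (I n ω - I 0 ω) / (n : ℝ)) '' Set.Icc 1 (N : ℤ)))) 0) ∂P := by
  let ϑ (f : ℤ → ℝ) : ENNReal :=
    ENNReal.ofReal (max (leftSlopeInf f 0 N - rightSlopeSup f 0 N) 0)
  have hϑ : Measurable ϑ := by
    have := measurable_leftSlopeInf 0 N
    have := measurable_rightSlopeSup 0 N
    fun_prop
  have hlaw := (identDistrib_of_map_eq (measurable_pi_lambda _ hMeas).aemeasurable
    (hshift k)).comp hϑ
  have hk' : (1 : ℤ) ≤ k := by exact_mod_cast hk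
  have hNk : (1 : ℤ) ≤ N - k := by omega
  calc _ = ∫⁻ ω, ϑ (fun n => I n ω) ∂P := by
        simp only [ϑ, leftSlopeInf, rightSlopeSup, zero_sub, zero_add]
    _ = ∫⁻ ω, ϑ (fun n => I (k + n) ω - I k ω - n * T k ω) ∂P := hlaw.lintegral_eq.symm
    _ ≤ _ := lintegral_mono fun ω => by
      refine ENNReal.ofReal_le_ofReal (max_le_max_right 0 ?_)
      rw [leftSlopeInf_recenter (I · ω) k (T k ω) (by omega),
        rightSlopeSup_recenter (I · ω) k (T k ω) (by omega), sub_sub_sub_cancel_right]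
      exact sub_le_sub (leftSlopeInf_anti (I · ω) k hk' (by omega))
        (rightSlopeSup_mono (I · ω) k hNk (by omega))

/-- for a process with the shift property, for `1 ≤ k ≤ N-1`,
`E[(γ_{k,k}^- - γ_{k,N-k}^+)₊] ≥ E[ϑ_N]` where
`ϑ_N = (γ_{0,N}^- - γ_{0,N}^+)₊`. -/
theorem stmt_10 {Ω : Type*} [MeasurableSpace Ω] (P : Measure Ω) [IsProbabilityMeasure P]
    (I : ℤ → Ω → ℝ) (hMeas : ∀ n, Measurable (I n))
    (hI0 : ∀ ω, I 0 ω = 0)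
    (T : ℤ → Ω → ℝ)
    (hshift : ∀ k : ℤ,
      Measure.map (fun ω => fun n : ℤ => I (k + n) ω - I k ω - (n : ℝ) * T k ω) P
        = Measure.map (fun ω => fun n : ℤ => I n ω) P)
    (N k : ℕ) (hk : 1 ≤ k) (hkN : k ≤ N - 1) (hN : 2 ≤ N) :
    ∫⁻ ω, ENNReal.ofReal
        (max ((sInf ((fun n : ℤ => (I k ω - I ((k : ℤ) - n) ω) / (n : ℝ)) '' Set.Icc 1 (k : ℤ)))
              - (sSup ((fun n : ℤ => (I ((k : ℤ) + n) ω - I k ω) / (n : ℝ))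
                  '' Set.Icc 1 ((N : ℤ) - k)))) 0) ∂P
      ≥ ∫⁻ ω, ENNReal.ofReal
        (max ((sInf ((fun n : ℤ => (I 0 ω - I (-n) ω) / (n : ℝ)) '' Set.Icc 1 (N : ℤ)))
              - (sSup ((fun n : ℤ => (I n ω - I 0 ω) / (n : ℝ)) '' Set.Icc 1 (N : ℤ)))) 0) ∂P :=
  stmt_10_general P I hMeas T hshift N k hk hkN
end
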